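/- Let X be an approximate subring of a ring, R := ⟨X⟩ the subring it generates, and let f : R → S be a locally compact model of X, i.e. a ring homomorphism to a locally compact Hausdorff topological ring S such that f[X] has compact closure in S and there exist a neighborhood V of 0 in S and m ∈ ℕ with f⁻¹[V] ⊆ X_m. Then for every neighborhood U of 0 in S, the set f⁻¹[U] is additively generic, i.e. finitely many additive translates of f⁻¹[U] cover X. -/

import Mathlib

/-!
Cover the compact set `closure (f '' X)` by the open translates `f x + interior U` with
`x ∈ X`. A finite subcover gives a finite `F ⊆ X` with `f '' X ⊆ f '' F + U`, and since `f`
is additive this is the same as `X ⊆ F + f⁻¹[U]`.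
-/

open Pointwise

/-- A subset of a (not necessarily unital or commutative) ring is additively symmetric
if it contains `0` and `-X = X`. -/
def AddSymmetric {R : Type*} [NonUnitalRing R] (X : Set R) : Prop :=
  (0 : R) ∈ X ∧ -X = X

/-- `X` is an approximate subring if it is additively symmetric and
`X·X ∪ (X+X) ⊆ F + X` for some finite subset `F` of the subring generated by `X`. -/
def IsApproxSubring {R : Type*} [NonUnitalRing R] (X : Set R) : Prop :=
  AddSymmetric X ∧ ∃ F : Set R, F.Finite ∧ F ⊆ (NonUnitalSubring.closure X : Set R) ∧
    X * X ∪ (X + X) ⊆ F + X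

/-- The sequence `X_0 := X`, `X_{n+1} := X_n·X_n + (X_n + X_n)`. -/
def XSeq {R : Type*} [NonUnitalRing R] (X : Set R) : ℕ → Set R
  | 0 => X
  | n + 1 => XSeq X n * XSeq X n + (XSeq X n + XSeq X n)

open Set Topology

theorem exists_finite_subset_add_of_isCompact_closure {G : Type*} [AddGroup G]
    [TopologicalSpace G] [IsTopologicalAddGroup G] {A U : Set G}
    (hA : IsCompact (closure A)) (hU : U ∈ 𝓝 0) :
    ∃ F ⊆ A, F.Finite ∧ A ⊆ F + U := by
  have hcover : closure A ⊆ ⋃ a ∈ A, (a + ·) '' interior U := by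
    intro x hx
    have hnhds : (x + ·) '' (-interior U) ∈ 𝓝 x := by
      simpa using (isOpenMap_add_left x).image_mem_nhds
        (neg_mem_nhds_zero G (interior_mem_nhds.2 hU))
    obtain ⟨_, ⟨w, hw, rfl⟩, hxw⟩ := mem_closure_iff_nhds.1 hx _ hnhds
    exact mem_biUnion hxw ⟨-w, hw, add_neg_cancel_right x w⟩
  obtain ⟨F, hFA, hF, hAF⟩ := hA.elim_finite_subcover_image
    (fun a _ => isOpenMap_add_left a _ isOpen_interior) hcover
  refine ⟨F, hFA, hF, subset_closure.trans (hAF.trans ?_)⟩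
  rw [iUnion_add_left_image]
  exact add_subset_add_left interior_subset

theorem image_subset_image_add_iff_subset_add_preimage {R S F : Type*} [AddGroup R] [AddGroup S]
    [FunLike F R S] [AddMonoidHomClass F R S] (f : F) {X T : Set R} {U : Set S} :
    f '' X ⊆ f '' T + U ↔ X ⊆ T + f ⁻¹' U := by
  constructor
  · rintro h x hx
    obtain ⟨_, ⟨t, ht, rfl⟩, u, hu, hfx⟩ := h (mem_image_of_mem f hx)
    refine ⟨t, ht, -t + x, ?_, add_neg_cancel_left t x⟩
    rwa [mem_preimage, map_add, map_neg, ← hfx, neg_add_cancel_left]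
  · rintro h _ ⟨x, hx, rfl⟩
    obtain ⟨t, ht, z, hz, rfl⟩ := h hx
    exact ⟨f t, mem_image_of_mem f ht, f z, hz, (map_add f t z).symm⟩

theorem locally_compact_ring_model_preimage_generic_general
    {R S : Type*} [NonUnitalRing R] [NonUnitalRing S] [TopologicalSpace S]
    [IsTopologicalRing S]
    (X : Set R)
    (f : R →ₙ+* S) (hcomp : IsCompact (closure (⇑f '' X)))
    (U : Set S) (hU : U ∈ nhds (0 : S)) :
    ∃ F : Set R, F.Finite ∧ X ⊆ F + ⇑f ⁻¹' U := by
  obtain ⟨F, -, hF, hXF⟩ :=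
    exists_subset_image_finite_and.1 (exists_finite_subset_add_of_isCompact_closure hcomp hU)
  exact ⟨F, hF, (image_subset_image_add_iff_subset_add_preimage f).1 hXF⟩

/-- Let `X` be an approximate subring generating the ring `R`, and let `f : R →ₙ+* S`
be a locally compact model of `X`. Then for every neighborhood `U` of `0` in `S`,
the set `f⁻¹[U]` is additively generic: finitely many additive translates of it
cover `X`. -/
theorem locally_compact_ring_model_preimage_generic
    {R S : Type*} [NonUnitalRing R] [NonUnitalRing S] [TopologicalSpace S]
    [IsTopologicalRing S] [LocallyCompactSpace S] [T2Space S]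
    (X : Set R) (hX : IsApproxSubring X) (hgen : NonUnitalSubring.closure X = ⊤)
    (f : R →ₙ+* S) (hcomp : IsCompact (closure (⇑f '' X)))
    (hmodel : ∃ V ∈ nhds (0 : S), ∃ m : ℕ, ⇑f ⁻¹' V ⊆ XSeq X m)
    (U : Set S) (hU : U ∈ nhds (0 : S)) :
    ∃ F : Set R, F.Finite ∧ X ⊆ F + ⇑f ⁻¹' U :=
  locally_compact_ring_model_preimage_generic_general X f hcomp U hU
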